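/- arXiv:2406.07790 — 4 statements merged into one kernel-verified Lean document; each statement's English description precedes it below -/
import Mathlib

section
/- The operator H defined by H(g)(x) = ∫_{Z_p} A(|x−y|_p) f(g(y)) dy + ∫_{Z_p} B(|x−y|_p) U(y) dy + Z(x) maps C(Z_p, ℝ) to itself and satisfies ‖H(g) − H(g′)‖_∞ ≤ L(f) ‖A‖_{L^1} ‖g − g′‖_∞ for all continuous g, g′. -/
/-!
By translation invariance of `μ`, `∫ A ‖x - y‖ h(y) dμ(y) = ∫ A ‖y‖ h(y + x) dμ(y)`. In this form
continuity in `x` follows from dominated convergence with dominating function `|A ‖y‖| · sup |h|`,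
and the integral is bounded by `‖A‖_{L¹} · sup |h|`. Applied to `h = f ∘ g - f ∘ g'`, for which
`sup |h| ≤ L ‖g - g'‖`, this is the Lipschitz estimate.
-/

open MeasureTheory

section RadialConv

variable {G : Type*} [NormedAddCommGroup G] [MeasurableSpace G]

noncomputable def radialConv (μ : Measure G) (A : ℝ → ℝ) (h : G → ℝ) (x : G) : ℝ :=
  ∫ y, A ‖x - y‖ * h y ∂μ

variable [BorelSpace G] {μ : Measure G} [μ.IsAddRightInvariant] {A : ℝ → ℝ}

theorem radialConv_eq_integral_add_right (h : G → ℝ) (x : G) :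
    radialConv μ A h x = ∫ y, A ‖y‖ * h (y + x) ∂μ := by
  rw [radialConv, ← integral_add_right_eq_self _ x]
  simp only [sub_add_cancel_right, norm_neg]

theorem integrable_radial_sub (hA : Integrable (fun y => A ‖y‖) μ) (x : G) :
    Integrable (fun y => A ‖x - y‖) μ := by
  simpa only [norm_sub_rev] using hA.comp_sub_right x

theorem integrable_radial_sub_mul (hA : Integrable (fun y => A ‖y‖) μ) {h : G → ℝ} {C : ℝ}
    (hh : AEStronglyMeasurable h μ) (hC : ∀ y, ‖h y‖ ≤ C) (x : G) :
    Integrable (fun y => A ‖x - y‖ * h y) μ :=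
  (integrable_radial_sub hA x).mul_bdd hh (.of_forall hC)

theorem radialConv_sub (hA : Integrable (fun y => A ‖y‖) μ) {h h' : G → ℝ} {C C' : ℝ}
    (hh : AEStronglyMeasurable h μ) (hC : ∀ y, ‖h y‖ ≤ C)
    (hh' : AEStronglyMeasurable h' μ) (hC' : ∀ y, ‖h' y‖ ≤ C') (x : G) :
    radialConv μ A h x - radialConv μ A h' x = radialConv μ A (h - h') x := by
  simp only [radialConv, Pi.sub_apply, mul_sub]
  exact (integral_sub (integrable_radial_sub_mul hA hh hC x)
    (integrable_radial_sub_mul hA hh' hC' x)).symm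

theorem abs_radialConv_le {h : G → ℝ} {C : ℝ} (hA : Integrable (fun y => A ‖y‖) μ)
    (hC : ∀ y, ‖h y‖ ≤ C) (x : G) :
    |radialConv μ A h x| ≤ (∫ y, |A ‖y‖| ∂μ) * C := by
  rw [radialConv_eq_integral_add_right, ← Real.norm_eq_abs, ← integral_mul_const]
  refine norm_integral_le_of_norm_le (hA.abs.mul_const C) (.of_forall fun y => ?_)
  rw [norm_mul, Real.norm_eq_abs]
  exact mul_le_mul_of_nonneg_left (hC _) (abs_nonneg _)

theorem continuous_radialConv (hA : Integrable (fun y => A ‖y‖) μ) {h : G → ℝ} {C : ℝ}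
    (hh : Continuous h) (hC : ∀ y, ‖h y‖ ≤ C) :
    Continuous (radialConv μ A h) := by
  rw [funext (radialConv_eq_integral_add_right h)]
  refine continuous_of_dominated (bound := fun y => |A ‖y‖| * C)
    (fun x => hA.aestronglyMeasurable.mul (hh.comp (continuous_add_const x)).aestronglyMeasurable)
    (fun x => .of_forall fun y => ?_) (hA.abs.mul_const C)
    (.of_forall fun y => continuous_const.mul (hh.comp (continuous_const_add y)))
  rw [norm_mul, Real.norm_eq_abs]
  exact mul_le_mul_of_nonneg_left (hC _) (abs_nonneg _)

end RadialConv

theorem cnn_operator_lipschitz_general (p : ℕ) [Fact p.Prime]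
    [MeasurableSpace ℤ_[p]] [BorelSpace ℤ_[p]]
    (μ : Measure ℤ_[p]) [μ.IsAddLeftInvariant]
    (A B : ℝ → ℝ)
    (hA : Integrable (fun y : ℤ_[p] => A ‖y‖) μ)
    (hB : Integrable (fun y : ℤ_[p] => B ‖y‖) μ)
    (U Z : C(ℤ_[p], ℝ))
    (L : NNReal) (f : ℝ → ℝ) (hf : LipschitzWith L f)
    (H : C(ℤ_[p], ℝ) → ℤ_[p] → ℝ)
    (hH : ∀ g x, H g x =
      (∫ y, A ‖x - y‖ * f (g y) ∂μ) + (∫ y, B ‖x - y‖ * U y ∂μ) + Z x) :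
    (∀ g, Continuous (H g)) ∧
    (∀ g g' : C(ℤ_[p], ℝ), ∀ x : ℤ_[p],
      |H g x - H g' x| ≤ (L : ℝ) * (∫ y, |A ‖y‖| ∂μ) * ‖g - g'‖) := by
  have hH' : ∀ g x, H g x = radialConv μ A (f ∘ g) x + radialConv μ B U x + Z x := hH
  let F : C(ℝ, ℝ) := ⟨f, hf.continuous⟩
  refine ⟨fun g => ?_, fun g g' x => ?_⟩
  · rw [funext (hH' g)]
    exact ((continuous_radialConv hA (F.comp g).continuous (F.comp g).norm_coe_le_norm).add
      (continuous_radialConv hB U.continuous U.norm_coe_le_norm)).add Z.continuous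
  · have hlip : ∀ y, ‖(f ∘ g - f ∘ g') y‖ ≤ L * ‖g - g'‖ := fun y =>
      (hf.norm_sub_le (g y) (g' y)).trans
        (mul_le_mul_of_nonneg_left ((g - g').norm_coe_le_norm y) L.2)
    calc |H g x - H g' x| = |radialConv μ A (f ∘ g) x - radialConv μ A (f ∘ g') x| := by
          rw [hH', hH']
          congr 1
          ring
      _ = |radialConv μ A (f ∘ g - f ∘ g') x| :=
          congrArg abs (radialConv_sub hA (F.comp g).continuous.aestronglyMeasurable
            (F.comp g).norm_coe_le_norm (F.comp g').continuous.aestronglyMeasurable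
            (F.comp g').norm_coe_le_norm x)
      _ ≤ (∫ y, |A ‖y‖| ∂μ) * (L * ‖g - g'‖) := abs_radialConv_le hA hlip x
      _ = L * (∫ y, |A ‖y‖| ∂μ) * ‖g - g'‖ := by ring

theorem cnn_operator_lipschitz (p : ℕ) [Fact p.Prime]
    [MeasurableSpace ℤ_[p]] [BorelSpace ℤ_[p]]
    (μ : Measure ℤ_[p]) [IsProbabilityMeasure μ] [μ.IsAddLeftInvariant]
    (A B : ℝ → ℝ)
    (hA : Integrable (fun y : ℤ_[p] => A ‖y‖) μ)
    (hB : Integrable (fun y : ℤ_[p] => B ‖y‖) μ)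
    (U Z : C(ℤ_[p], ℝ))
    (L : NNReal) (f : ℝ → ℝ) (hf : LipschitzWith L f) (hf0 : f 0 = 0)
    (H : C(ℤ_[p], ℝ) → ℤ_[p] → ℝ)
    (hH : ∀ g x, H g x =
      (∫ y, A ‖x - y‖ * f (g y) ∂μ) + (∫ y, B ‖x - y‖ * U y ∂μ) + Z x) :
    (∀ g, Continuous (H g)) ∧
    (∀ g g' : C(ℤ_[p], ℝ), ∀ x : ℤ_[p],
      |H g x - H g' x| ≤ (L : ℝ) * (∫ y, |A ‖y‖| ∂μ) * ‖g - g'‖) :=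
  cnn_operator_lipschitz_general p μ A B hA hB U Z L f hf H hH
end

section
/- For each X_0 ∈ C(Z_p, ℝ) and each τ > 0 there exists a unique X ∈ C([0,τ], C(Z_p, ℝ)) satisfying X(x,t) = e^{−t} X_0(x) + ∫_0^t e^{−(t−s)} H(X(·,s))(x) ds, where H is the CNN operator. -/
open MeasureTheory

theorem picard_aux {E : Type*} [NormedAddCommGroup E] [NormedSpace ℝ E] [CompleteSpace E]
    (F : E → E) (K : ℝ) (hK : 0 ≤ K)
    (hF : ∀ a b, dist (F a) (F b) ≤ K * dist a b)
    (X₀ : E) (τ : ℝ) (hτ : 0 < τ) :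
    ∃! X : C(Set.Icc (0:ℝ) τ, E), ∀ t : Set.Icc (0:ℝ) τ,
      X t = Real.exp (-(t : ℝ)) •
        (X₀ + ∫ s in (0:ℝ)..(t : ℝ), Real.exp s • F (X (Set.projIcc 0 τ hτ.le s))) := by
  set proj : ℝ → Set.Icc (0:ℝ) τ := Set.projIcc 0 τ hτ.le with hprojdef
  have hFc : Continuous F :=
    (LipschitzWith.of_dist_le_mul (K := K.toNNReal) (fun a b => by
      rw [Real.coe_toNNReal K hK]; exact hF a b)).continuous
  have hci : ∀ X : C(Set.Icc (0:ℝ) τ, E),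
      Continuous fun s : ℝ => Real.exp s • F (X (proj s)) :=
    fun X => Real.continuous_exp.smul (hFc.comp (X.continuous.comp continuous_projIcc))
  have hprim : ∀ X : C(Set.Icc (0:ℝ) τ, E),
      Continuous fun t : ℝ => ∫ s in (0:ℝ)..t, Real.exp s • F (X (proj s)) :=
    fun X => intervalIntegral.continuous_primitive
      (fun a b => ((hci X).intervalIntegrable a b)) 0
  set Φ : C(Set.Icc (0:ℝ) τ, E) → C(Set.Icc (0:ℝ) τ, E) := fun X =>
    ⟨fun t => Real.exp (-(t : ℝ)) •
        (X₀ + ∫ s in (0:ℝ)..(t : ℝ), Real.exp s • F (X (proj s))),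
      ((Real.continuous_exp.comp (continuous_subtype_val.neg)).smul
        (continuous_const.add ((hprim X).comp continuous_subtype_val)))⟩ with hΦdef
  have hΦapp : ∀ X (t : Set.Icc (0:ℝ) τ), Φ X t = Real.exp (-(t : ℝ)) •
      (X₀ + ∫ s in (0:ℝ)..(t : ℝ), Real.exp s • F (X (proj s))) := fun X t => rfl
  have hiff : ∀ X : C(Set.Icc (0:ℝ) τ, E),
      (∀ t : Set.Icc (0:ℝ) τ, X t = Real.exp (-(t : ℝ)) •
        (X₀ + ∫ s in (0:ℝ)..(t : ℝ), Real.exp s • F (X (proj s)))) ↔ Function.IsFixedPt Φ X := by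
    intro X
    constructor
    · intro h
      exact ContinuousMap.ext fun t => ((h t).symm)
    · intro h t
      conv_lhs => rw [← h]
      exact hΦapp X t
  -- one-step estimate
  have step : ∀ (X Y : C(Set.Icc (0:ℝ) τ, E)) (t : Set.Icc (0:ℝ) τ),
      dist (Φ X t) (Φ Y t) ≤
        K * ∫ s in (0:ℝ)..(t : ℝ), dist (X (proj s)) (Y (proj s)) := by
    intro X Y t
    have ht0 : (0:ℝ) ≤ (t : ℝ) := t.2.1
    have hkey : Φ X t - Φ Y t = Real.exp (-(t : ℝ)) •
        ∫ s in (0:ℝ)..(t : ℝ), Real.exp s • (F (X (proj s)) - F (Y (proj s))) := by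
      rw [hΦapp, hΦapp, ← smul_sub, add_sub_add_left_eq_sub,
        ← intervalIntegral.integral_sub ((hci X).intervalIntegrable _ _)
          ((hci Y).intervalIntegrable _ _)]
      simp_rw [smul_sub]
    have hd1 : Continuous fun s : ℝ => dist (X (proj s)) (Y (proj s)) :=
      (X.continuous.comp continuous_projIcc).dist (Y.continuous.comp continuous_projIcc)
    calc dist (Φ X t) (Φ Y t) = ‖Φ X t - Φ Y t‖ := dist_eq_norm _ _
      _ = Real.exp (-(t : ℝ)) *
            ‖∫ s in (0:ℝ)..(t : ℝ), Real.exp s • (F (X (proj s)) - F (Y (proj s)))‖ := by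
          rw [hkey, norm_smul, Real.norm_eq_abs, abs_of_pos (Real.exp_pos _)]
      _ ≤ Real.exp (-(t : ℝ)) *
            ∫ s in (0:ℝ)..(t : ℝ), ‖Real.exp s • (F (X (proj s)) - F (Y (proj s)))‖ := by
          gcongr
          exact intervalIntegral.norm_integral_le_integral_norm ht0
      _ ≤ Real.exp (-(t : ℝ)) *
            ∫ s in (0:ℝ)..(t : ℝ), Real.exp (t : ℝ) * (K * dist (X (proj s)) (Y (proj s))) := by
          gcongr
          apply intervalIntegral.integral_mono_on ht0
          · exact ((Real.continuous_exp.smul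
              ((hFc.comp (X.continuous.comp continuous_projIcc)).sub
                (hFc.comp (Y.continuous.comp continuous_projIcc)))).norm).intervalIntegrable _ _
          · exact (continuous_const.mul (continuous_const.mul hd1)).intervalIntegrable _ _
          · intro s hs
            rw [norm_smul, Real.norm_eq_abs, abs_of_pos (Real.exp_pos _), ← dist_eq_norm]
            have h1 : Real.exp s ≤ Real.exp (t : ℝ) := Real.exp_le_exp.2 hs.2
            have h2 : dist (F (X (proj s))) (F (Y (proj s))) ≤
                K * dist (X (proj s)) (Y (proj s)) := hF _ _
            exact mul_le_mul h1 h2 dist_nonneg (Real.exp_pos _).le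
      _ = K * ∫ s in (0:ℝ)..(t : ℝ), dist (X (proj s)) (Y (proj s)) := by
          rw [intervalIntegral.integral_const_mul, ← mul_assoc, ← Real.exp_add]
          simp_rw [intervalIntegral.integral_const_mul]
          rw [neg_add_cancel, Real.exp_zero, one_mul]
  -- iterated estimate
  have iter : ∀ (n : ℕ) (X Y : C(Set.Icc (0:ℝ) τ, E)) (t : Set.Icc (0:ℝ) τ),
      dist (Φ^[n] X t) (Φ^[n] Y t) ≤ K ^ n * (t : ℝ) ^ n / n.factorial * dist X Y := by
    intro n
    induction n with
    | zero => intro X Y t; simpa using ContinuousMap.dist_apply_le_dist t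
    | succ n ih =>
      intro X Y t
      have ht0 : (0:ℝ) ≤ (t : ℝ) := t.2.1
      have hd1 : Continuous fun s : ℝ => dist ((Φ^[n] X) (proj s)) ((Φ^[n] Y) (proj s)) :=
        ((Φ^[n] X).continuous.comp continuous_projIcc).dist
          ((Φ^[n] Y).continuous.comp continuous_projIcc)
      rw [Function.iterate_succ_apply', Function.iterate_succ_apply']
      calc dist (Φ (Φ^[n] X) t) (Φ (Φ^[n] Y) t)
          ≤ K * ∫ s in (0:ℝ)..(t : ℝ), dist ((Φ^[n] X) (proj s)) ((Φ^[n] Y) (proj s)) :=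
            step _ _ t
        _ ≤ K * ∫ s in (0:ℝ)..(t : ℝ), K ^ n * s ^ n / n.factorial * dist X Y := by
            apply mul_le_mul_of_nonneg_left _ hK
            refine intervalIntegral.integral_mono_on
              (g := fun s : ℝ => K ^ n * s ^ n / n.factorial * dist X Y) ht0
              (hd1.intervalIntegrable _ _)
              ((((continuous_const.mul (continuous_pow n)).div_const _).mul
                continuous_const).intervalIntegrable _ _) ?_
            intro s hs
            have hmem : s ∈ Set.Icc (0:ℝ) τ := ⟨hs.1, hs.2.trans t.2.2⟩
            have hps : ((proj s : ℝ)) = s := by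
              rw [hprojdef, Set.projIcc_of_mem hτ.le hmem]
            calc dist ((Φ^[n] X) (proj s)) ((Φ^[n] Y) (proj s))
                ≤ K ^ n * ((proj s : ℝ)) ^ n / n.factorial * dist X Y := ih X Y _
              _ = K ^ n * s ^ n / n.factorial * dist X Y := by rw [hps]
        _ = K ^ (n + 1) * (t : ℝ) ^ (n + 1) / (n + 1).factorial * dist X Y := by
            have : (fun s : ℝ => K ^ n * s ^ n / n.factorial * dist X Y) =
                fun s : ℝ => (K ^ n / n.factorial * dist X Y) * s ^ n := by
              funext s; ring
            rw [this, intervalIntegral.integral_const_mul, integral_pow,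
              zero_pow (Nat.succ_ne_zero n), sub_zero]
            have hfac : ((n + 1).factorial : ℝ) = ((n : ℝ) + 1) * n.factorial := by
              rw [Nat.factorial_succ]; push_cast; ring
            rw [hfac]
            have hn1 : ((n : ℝ) + 1) ≠ 0 := by positivity
            have hnf : (n.factorial : ℝ) ≠ 0 := Nat.cast_ne_zero.2 n.factorial_ne_zero

            field_simp
            ring
  -- sup estimate over the interval
  have iterY : ∀ (n : ℕ) (X Y : C(Set.Icc (0:ℝ) τ, E)),
      dist (Φ^[n] X) (Φ^[n] Y) ≤ (K * τ) ^ n / n.factorial * dist X Y := by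
    intro n X Y
    have h0 : (0:ℝ) ≤ (K * τ) ^ n / n.factorial * dist X Y := by positivity
    rw [ContinuousMap.dist_le h0]
    intro t
    calc dist (Φ^[n] X t) (Φ^[n] Y t)
        ≤ K ^ n * (t : ℝ) ^ n / n.factorial * dist X Y := iter n X Y t
      _ ≤ (K * τ) ^ n / n.factorial * dist X Y := by
          rw [mul_pow]
          have h1 : ((t : ℝ)) ^ n ≤ τ ^ n := pow_le_pow_left₀ t.2.1 t.2.2 n
          have h2 : K ^ n * (t : ℝ) ^ n / n.factorial ≤ K ^ n * τ ^ n / n.factorial := by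
            gcongr
          exact mul_le_mul_of_nonneg_right h2 dist_nonneg
  obtain ⟨n, hn⟩ : ∃ n : ℕ, (K * τ) ^ n / n.factorial < 1 :=
    ((FloorSemiring.tendsto_pow_div_factorial_atTop (K * τ)).eventually
      (gt_mem_nhds one_pos)).exists
  have hc0 : (0:ℝ) ≤ (K * τ) ^ n / n.factorial := by positivity
  haveI : Nonempty C(Set.Icc (0:ℝ) τ, E) := ⟨ContinuousMap.const _ 0⟩
  have hcontr : ContractingWith ((K * τ) ^ n / n.factorial).toNNReal (Φ^[n]) := by
    constructor
    · rw [← NNReal.coe_lt_coe, NNReal.coe_one, Real.coe_toNNReal _ hc0]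
      exact hn
    · apply LipschitzWith.of_dist_le_mul
      intro X Y
      rw [Real.coe_toNNReal _ hc0]
      exact iterY n X Y
  refine ⟨ContractingWith.fixedPoint (Φ^[n]) hcontr, ?_, ?_⟩
  · exact (hiff _).mpr hcontr.isFixedPt_fixedPoint_iterate
  · intro Y hY
    exact hcontr.fixedPoint_unique (((hiff Y).mp hY).iterate n)

theorem cnn_cauchy_existence_uniqueness (p : ℕ) [Fact p.Prime]
    [MeasurableSpace ℤ_[p]] [BorelSpace ℤ_[p]]
    (μ : Measure ℤ_[p]) [IsProbabilityMeasure μ] [μ.IsAddLeftInvariant]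
    (A B : ℝ → ℝ)
    (hA : Integrable (fun y : ℤ_[p] => A ‖y‖) μ)
    (hB : Integrable (fun y : ℤ_[p] => B ‖y‖) μ)
    (U Z : C(ℤ_[p], ℝ))
    (L : NNReal) (f : ℝ → ℝ) (hf : LipschitzWith L f) (hf0 : f 0 = 0)
    (hfbdd : BddAbove (Set.range fun s : ℝ => |f s|))
    (H : C(ℤ_[p], ℝ) → ℤ_[p] → ℝ)
    (hH : ∀ g x, H g x =
      (∫ y, A ‖x - y‖ * f (g y) ∂μ) + (∫ y, B ‖x - y‖ * U y ∂μ) + Z x)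
    (X₀ : C(ℤ_[p], ℝ)) (τ : ℝ) (hτ : 0 < τ) :
    ∃! X : C(Set.Icc (0 : ℝ) τ, C(ℤ_[p], ℝ)),
      ∀ (t : Set.Icc (0 : ℝ) τ) (x : ℤ_[p]),
        X t x = Real.exp (-(t : ℝ)) * X₀ x +
          ∫ s in (0 : ℝ)..(t : ℝ),
            Real.exp (-((t : ℝ) - s)) * H (X (Set.projIcc 0 τ hτ.le s)) x := by
  classical
  have hfl : ∀ a b : ℝ, |f a - f b| ≤ (L : ℝ) * |a - b| := fun a b => by
    have := hf.dist_le_mul a b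
    simpa [Real.dist_eq] using this
  have hfb : ∀ a : ℝ, |f a| ≤ (L : ℝ) * |a| := fun a => by
    simpa [hf0] using hfl a 0
  set IA : ℝ := ∫ t, |A ‖t‖| ∂μ with hIAdef
  have hIA0 : 0 ≤ IA := integral_nonneg fun t => abs_nonneg _
  set K : ℝ := (L : ℝ) * IA with hKdef
  have hK0 : 0 ≤ K := mul_nonneg L.2 hIA0
  -- shift identity
  have shift : ∀ (φ : ℝ → ℝ) (h : ℤ_[p] → ℝ) (x : ℤ_[p]),
      ∫ y, φ ‖x - y‖ * h y ∂μ = ∫ t, φ ‖t‖ * h (x + t) ∂μ := by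
    intro φ h x
    have h1 := integral_add_left_eq_self (μ := μ) (fun y => φ ‖y - x‖ * h y) x
    simp only [add_sub_cancel_left] at h1
    have h2 : (∫ y, φ ‖x - y‖ * h y ∂μ) = ∫ y, φ ‖y - x‖ * h y ∂μ := by
      congr 1
      funext y
      rw [norm_sub_rev]
    rw [h2, ← h1]
  -- integrability in the shifted picture
  have hint : ∀ (φ : ℝ → ℝ), Integrable (fun y : ℤ_[p] => φ ‖y‖) μ →
      ∀ (h : ℤ_[p] → ℝ), Continuous h → ∀ (C : ℝ), (∀ z, |h z| ≤ C) → ∀ x : ℤ_[p],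
      Integrable (fun t => φ ‖t‖ * h (x + t)) μ := by
    intro φ hφ h hh C hC x
    refine (hφ.abs.mul_const C).mono'
      (hφ.1.mul ((hh.comp (continuous_const.add continuous_id)).aestronglyMeasurable)) ?_
    filter_upwards with t
    rw [Real.norm_eq_abs, abs_mul]
    exact mul_le_mul_of_nonneg_left (hC _) (abs_nonneg _)
  -- continuity of shifted integrals
  have hcont : ∀ (φ : ℝ → ℝ), Integrable (fun y : ℤ_[p] => φ ‖y‖) μ →
      ∀ (h : ℤ_[p] → ℝ), Continuous h → ∀ (C : ℝ), (∀ z, |h z| ≤ C) →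
      Continuous fun x : ℤ_[p] => ∫ t, φ ‖t‖ * h (x + t) ∂μ := by
    intro φ hφ h hh C hC
    refine continuous_of_dominated
      (fun x => hφ.1.mul
        ((hh.comp (continuous_const.add continuous_id)).aestronglyMeasurable))
      (fun x => ?_) (hφ.abs.mul_const C) ?_
    · filter_upwards with t
      rw [Real.norm_eq_abs, abs_mul]
      exact mul_le_mul_of_nonneg_left (hC _) (abs_nonneg _)
    · filter_upwards with t
      exact continuous_const.mul (hh.comp (continuous_id.add continuous_const))
  have hHrw : ∀ g : C(ℤ_[p], ℝ), ∀ x, H g x =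
      (∫ t, A ‖t‖ * f (g (x + t)) ∂μ) + (∫ t, B ‖t‖ * U (x + t) ∂μ) + Z x := by
    intro g x
    rw [hH, shift A (fun y => f (g y)) x, shift B U x]
  have hHcont : ∀ g : C(ℤ_[p], ℝ), Continuous (H g) := by
    intro g
    have h1 : Continuous fun x : ℤ_[p] => ∫ t, A ‖t‖ * f (g (x + t)) ∂μ :=
      hcont A hA (fun y => f (g y)) (hf.continuous.comp g.continuous) ((L : ℝ) * ‖g‖)
        (fun z => (hfb _).trans
          (mul_le_mul_of_nonneg_left (g.norm_coe_le_norm z) L.2))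
    have h2 : Continuous fun x : ℤ_[p] => ∫ t, B ‖t‖ * U (x + t) ∂μ :=
      hcont B hB U U.continuous ‖U‖ (fun z => U.norm_coe_le_norm z)
    have : Continuous fun x : ℤ_[p] =>
        (∫ t, A ‖t‖ * f (g (x + t)) ∂μ) + (∫ t, B ‖t‖ * U (x + t) ∂μ) + Z x :=
      (h1.add h2).add Z.continuous
    convert this using 1
    funext x
    exact hHrw g x
  set Hc : C(ℤ_[p], ℝ) → C(ℤ_[p], ℝ) := fun g => ⟨H g, hHcont g⟩ with hHcdef
  have hHcapp : ∀ g x, Hc g x = H g x := fun g x => rfl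
  -- Lipschitz bound
  have hHlip : ∀ g₁ g₂ : C(ℤ_[p], ℝ), dist (Hc g₁) (Hc g₂) ≤ K * dist g₁ g₂ := by
    intro g₁ g₂
    rw [ContinuousMap.dist_le (mul_nonneg hK0 dist_nonneg)]
    intro x
    have i1 := hint A hA (fun y => f (g₁ y)) (hf.continuous.comp g₁.continuous)
      ((L : ℝ) * ‖g₁‖) (fun z => (hfb _).trans
        (mul_le_mul_of_nonneg_left (g₁.norm_coe_le_norm z) L.2)) x
    have i2 := hint A hA (fun y => f (g₂ y)) (hf.continuous.comp g₂.continuous)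
      ((L : ℝ) * ‖g₂‖) (fun z => (hfb _).trans
        (mul_le_mul_of_nonneg_left (g₂.norm_coe_le_norm z) L.2)) x
    have e1 : Hc g₁ x - Hc g₂ x =
        ∫ t, A ‖t‖ * (f (g₁ (x + t)) - f (g₂ (x + t))) ∂μ := by
      rw [hHcapp, hHcapp, hHrw, hHrw, add_sub_add_right_eq_sub,
        add_sub_add_right_eq_sub, ← integral_sub i1 i2]
      congr 1
      funext t
      ring
    rw [Real.dist_eq, e1, ← Real.norm_eq_abs]
    have hb : ∀ t : ℤ_[p], ‖A ‖t‖ * (f (g₁ (x + t)) - f (g₂ (x + t)))‖ ≤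
        |A ‖t‖| * ((L : ℝ) * dist g₁ g₂) := by
      intro t
      rw [Real.norm_eq_abs, abs_mul]
      refine mul_le_mul_of_nonneg_left ?_ (abs_nonneg _)
      refine (hfl _ _).trans (mul_le_mul_of_nonneg_left ?_ L.2)
      have := ContinuousMap.dist_apply_le_dist (f := g₁) (g := g₂) (x + t)
      rwa [Real.dist_eq] at this
    calc ‖∫ t, A ‖t‖ * (f (g₁ (x + t)) - f (g₂ (x + t))) ∂μ‖
        ≤ ∫ t, |A ‖t‖| * ((L : ℝ) * dist g₁ g₂) ∂μ :=
          norm_integral_le_of_norm_le (hA.abs.mul_const _)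
            (Filter.Eventually.of_forall hb)
      _ = K * dist g₁ g₂ := by
          rw [integral_mul_const, hKdef, hIAdef]
          ring
  -- evaluation identity
  have hHcC : Continuous Hc :=
    (LipschitzWith.of_dist_le_mul (K := K.toNNReal) (fun a b => by
      rw [Real.coe_toNNReal _ hK0]; exact hHlip a b)).continuous
  have heval : ∀ (X : C(Set.Icc (0 : ℝ) τ, C(ℤ_[p], ℝ))) (t : Set.Icc (0 : ℝ) τ)
      (x : ℤ_[p]),
      (Real.exp (-(t : ℝ)) • (X₀ + ∫ s in (0 : ℝ)..(t : ℝ),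
          Real.exp s • Hc (X (Set.projIcc 0 τ hτ.le s)))) x
      = Real.exp (-(t : ℝ)) * X₀ x + ∫ s in (0 : ℝ)..(t : ℝ),
          Real.exp (-((t : ℝ) - s)) * H (X (Set.projIcc 0 τ hτ.le s)) x := by
    intro X t x
    have hci : Continuous fun s : ℝ => Real.exp s • Hc (X (Set.projIcc 0 τ hτ.le s)) :=
      Real.continuous_exp.smul (hHcC.comp (X.continuous.comp continuous_projIcc))
    have hint' : IntervalIntegrable
        (fun s : ℝ => Real.exp s • Hc (X (Set.projIcc 0 τ hτ.le s))) volume 0 (t : ℝ) :=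
      hci.intervalIntegrable _ _
    have e2 := (ContinuousMap.evalCLM ℝ x).intervalIntegral_comp_comm hint'
    rw [ContinuousMap.smul_apply, ContinuousMap.add_apply]
    rw [show ((∫ s in (0 : ℝ)..(t : ℝ),
          Real.exp s • Hc (X (Set.projIcc 0 τ hτ.le s))) x)
        = (ContinuousMap.evalCLM ℝ x) (∫ s in (0 : ℝ)..(t : ℝ),
          Real.exp s • Hc (X (Set.projIcc 0 τ hτ.le s))) from rfl, ← e2]
    have e3 : ∀ s : ℝ, (ContinuousMap.evalCLM ℝ x)
        (Real.exp s • Hc (X (Set.projIcc 0 τ hτ.le s)))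
        = Real.exp s * H (X (Set.projIcc 0 τ hτ.le s)) x := fun s => rfl
    simp_rw [e3]
    rw [smul_eq_mul, mul_add, ← intervalIntegral.integral_const_mul]
    congr 1
    refine intervalIntegral.integral_congr fun s _ => ?_
    rw [show -((t : ℝ) - s) = -(t : ℝ) + s by ring, Real.exp_add]
    ring
  have main := picard_aux Hc K hK0 hHlip X₀ τ hτ
  refine (existsUnique_congr fun X => ?_).mp main
  constructor
  · intro h t x
    rw [h t]
    exact heval X t x
  · intro h t
    ext x
    rw [heval X t x]
    exact h t x
end

section
/- Suppose a < 1. Then the function X_stat(x) defined piecewise by: a + (B∗U)(x) + Z(x) if (B∗U)(x)+Z(x) > 1−a; −a + (B∗U)(x) + Z(x) if (B∗U)(x)+Z(x) < −(1−a); and ((B∗U)(x)+Z(x))/(1−a) if |(B∗U)(x)+Z(x)| ≤ 1−a, is the unique continuous solution of the stationary equation X(x) = a f(X(x)) + (B∗U)(x) + Z(x) on Z_p, where f(s) = (|s+1|−|s−1|)/2. -/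
open MeasureTheory
open scoped Convolution

private lemma fclamp (s : ℝ) :
    (|s + 1| - |s - 1|) / 2 = if 1 < s then 1 else if s < -1 then -1 else s := by
  split_ifs with h1 h2
  · rw [abs_of_nonneg (by linarith), abs_of_nonneg (by linarith)]; ring
  · rw [abs_of_nonpos (by linarith), abs_of_nonpos (by linarith)]; ring
  · push_neg at h1 h2
    rw [abs_of_nonneg (by linarith), abs_of_nonpos (by linarith)]; ring

private lemma scalar_fix {a : ℝ} (ha : a < 1) {w x : ℝ}
    (hx : x = if 1 - a < w then a + w else if w < -(1 - a) then -a + w else w / (1 - a)) :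
    x = a * ((|x + 1| - |x - 1|) / 2) + w := by
  have h1a : (0:ℝ) < 1 - a := by linarith
  rw [fclamp]
  split_ifs at hx with h1 h2
  · have hx1 : 1 < x := by rw [hx]; linarith
    rw [if_pos hx1, hx]; ring
  · have hx2 : x < -1 := by rw [hx]; linarith
    rw [if_neg (by linarith), if_pos hx2, hx]; ring
  · push_neg at h1 h2
    have hxle : x ≤ 1 := by rw [hx, div_le_one h1a]; linarith
    have hxge : -1 ≤ x := by rw [hx, le_div_iff₀ h1a]; linarith
    have hxw : x * (1 - a) = w := by
      rw [hx]; field_simp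
    rw [if_neg (by linarith), if_neg (by linarith)]
    linear_combination hxw

private lemma scalar_unique {a : ℝ} (ha : a < 1) (w x : ℝ)
    (hx : x = a * ((|x + 1| - |x - 1|) / 2) + w) :
    x = if 1 - a < w then a + w else if w < -(1 - a) then -a + w else w / (1 - a) := by
  have h1a : (0:ℝ) < 1 - a := by linarith
  rw [fclamp] at hx
  split_ifs at hx with h1 h2
  · rw [if_pos (by linarith)]; linarith
  · rw [if_neg (by linarith), if_pos (by linarith)]; linarith
  · push_neg at h1 h2
    have hw : w = x * (1 - a) := by linarith [hx]
    rw [if_neg (by nlinarith), if_neg (by nlinarith), hw,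
      mul_div_cancel_right₀ x h1a.ne']

private lemma hform {a : ℝ} (ha : a < 1) (w : ℝ) :
    (if 1 - a < w then a + w else if w < -(1 - a) then -a + w else w / (1 - a))
      = w + a * ((|w / (1 - a) + 1| - |w / (1 - a) - 1|) / 2) := by
  have h1a : (0:ℝ) < 1 - a := by linarith
  rw [fclamp]
  by_cases h1 : 1 - a < w
  · have hs : 1 < w / (1 - a) := (one_lt_div h1a).mpr h1
    rw [if_pos h1, if_pos hs]; ring
  · by_cases h2 : w < -(1 - a)
    · have hs : w / (1 - a) < -1 := by rw [div_lt_iff₀ h1a]; linarith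
      rw [if_neg h1, if_pos h2, if_neg (by linarith), if_pos hs]; ring
    · push_neg at h1 h2
      have hs1 : ¬ (1 < w / (1 - a)) := by rw [not_lt, div_le_one h1a]; linarith
      have hs2 : ¬ (w / (1 - a) < -1) := by rw [not_lt, le_div_iff₀ h1a]; linarith
      rw [if_neg (by linarith), if_neg (by linarith), if_neg hs1, if_neg hs2]
      field_simp
      ring

theorem stationary_state_unique_a_lt_one (p : ℕ) [Fact p.Prime]
    [MeasurableSpace ℤ_[p]] [BorelSpace ℤ_[p]]
    (μ : Measure ℤ_[p]) [IsProbabilityMeasure μ] [μ.IsAddLeftInvariant]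
    (B : ℤ_[p] → ℝ) (hB : Integrable B μ) (U Z : C(ℤ_[p], ℝ))
    (a : ℝ) (ha : a < 1)
    (f : ℝ → ℝ) (hf : ∀ s, f s = (|s + 1| - |s - 1|) / 2)
    (W : ℤ_[p] → ℝ)
    (hW : ∀ x, W x = (∫ y, B (x - y) * U y ∂μ) + Z x)
    (Xstat : ℤ_[p] → ℝ)
    (hXstat : ∀ x, Xstat x =
      if 1 - a < W x then a + W x
      else if W x < -(1 - a) then -a + W x
      else W x / (1 - a)) :
    Continuous Xstat ∧
    (∀ x, Xstat x = a * f (Xstat x) + W x) ∧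
    (∀ Y : ℤ_[p] → ℝ, Continuous Y →
      (∀ x, Y x = a * f (Y x) + W x) → Y = Xstat) := by
  have h1a : (0:ℝ) < 1 - a := by linarith
  -- set up measure-theoretic instances
  haveI : μ.IsOpenPosMeasure :=
    isOpenPosMeasure_of_addLeftInvariant_of_compact (μ := μ) Set.univ isCompact_univ
      (by simp)
  haveI : μ.IsAddHaarMeasure := ⟨⟩
  haveI : μ.IsNegInvariant := inferInstance
  -- continuity of W
  have hWc : Continuous W := by
    have hbdd : BddAbove (Set.range fun x => ‖U x‖) :=
      (isCompact_range (U.continuous.norm)).bddAbove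
    have hconv : Continuous (B ⋆[ContinuousLinearMap.mul ℝ ℝ, μ] U) :=
      BddAbove.continuous_convolution_right_of_integrable _ hbdd hB U.continuous
    have hkey : ∀ x, (∫ y, B (x - y) * U y ∂μ)
        = (B ⋆[ContinuousLinearMap.mul ℝ ℝ, μ] U) x := by
      intro x
      rw [convolution_def]
      have h1 : (∫ y, B (x - y) * U y ∂μ)
          = ∫ y, (fun t => B t * U (x - t)) (x - y) ∂μ := by
        simp
      rw [h1, integral_sub_left_eq_self (fun t => B t * U (x - t)) μ x]
      simp
    have : W = fun x => (B ⋆[ContinuousLinearMap.mul ℝ ℝ, μ] U) x + Z x := by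
      funext x; rw [hW x, hkey x]
    rw [this]
    exact hconv.add Z.continuous
  refine ⟨?_, ?_, ?_⟩
  · have hX : Xstat = fun x =>
        W x + a * ((|W x / (1 - a) + 1| - |W x / (1 - a) - 1|) / 2) := by
      funext x
      rw [hXstat x, hform ha (W x)]
    rw [hX]
    fun_prop
  · intro x
    rw [hf]
    exact scalar_fix ha (hXstat x)
  · intro Y _ hY
    funext x
    rw [hXstat x]
    exact scalar_unique ha (W x) (Y x) (by have := hY x; rwa [hf] at this)
end

section
/- For a real number a < 1 and any real number c, the equation s = a f(s) + c with f(s) = (|s+1|−|s−1|)/2 has a unique real solution, given by s = a + c if c > 1−a, s = −a + c if c < −(1−a), and s = c/(1−a) if |c| ≤ 1−a. -/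
theorem scalar_stationary_eq_a_lt_one
    (a : ℝ) (ha : a < 1)
    (f : ℝ → ℝ) (hf : ∀ s, f s = (|s + 1| - |s - 1|) / 2)
    (c : ℝ) :
    (∃! s : ℝ, s = a * f s + c) ∧
    (∀ s : ℝ, s = a * f s + c ↔
      s = (if 1 - a < c then a + c
           else if c < -(1 - a) then -a + c
           else c / (1 - a))) := by
  have h1a : (0:ℝ) < 1 - a := by linarith
  have key : ∀ s : ℝ, s = a * f s + c ↔
      s = (if 1 - a < c then a + c
           else if c < -(1 - a) then -a + c
           else c / (1 - a)) := by
    intro s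
    rw [hf]
    constructor
    · intro hs
      rcases le_or_gt 1 s with h | h
      · rw [abs_of_nonneg (by linarith : (0:ℝ) ≤ s + 1),
            abs_of_nonneg (by linarith : (0:ℝ) ≤ s - 1)] at hs
        have hsac : s = a + c := by linarith
        have hc : 1 - a ≤ c := by linarith
        rcases lt_or_eq_of_le hc with h' | h'
        · rw [if_pos h']; exact hsac
        · rw [if_neg (by linarith), if_neg (by linarith), ← h']
          field_simp
          linarith
      · rcases le_or_gt s (-1) with h2 | h2
        · rw [abs_of_nonpos (by linarith : s + 1 ≤ 0),
              abs_of_nonpos (by linarith : s - 1 ≤ 0)] at hs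
          have hsac : s = -a + c := by linarith
          have hc : c ≤ -(1 - a) := by linarith
          rcases lt_or_eq_of_le hc with h' | h'
          · rw [if_neg (by linarith), if_pos h']; exact hsac
          · rw [if_neg (by linarith), if_neg (by linarith), h']
            field_simp
            nlinarith
        · rw [abs_of_nonneg (by linarith : (0:ℝ) ≤ s + 1),
              abs_of_nonpos (by linarith : s - 1 ≤ 0)] at hs
          have hsc : s * (1 - a) = c := by linear_combination hs
          have hc1 : c < 1 - a := by nlinarith
          have hc2 : -(1 - a) < c := by nlinarith
          rw [if_neg (by linarith), if_neg (by linarith)]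
          field_simp
          linarith
    · intro hs
      split_ifs at hs with h1 h2
      · subst hs
        rw [abs_of_nonneg (by linarith : (0:ℝ) ≤ a + c + 1),
            abs_of_nonneg (by linarith : (0:ℝ) ≤ a + c - 1)]
        ring
      · subst hs
        rw [abs_of_nonpos (by linarith : -a + c + 1 ≤ 0),
            abs_of_nonpos (by linarith : -a + c - 1 ≤ 0)]
        ring
      · have hle : c / (1 - a) ≤ 1 := by rw [div_le_one h1a]; linarith
        have hge : -1 ≤ c / (1 - a) := by rw [le_div_iff₀ h1a]; linarith
        subst hs
        rw [abs_of_nonneg (by linarith : (0:ℝ) ≤ c / (1 - a) + 1),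
            abs_of_nonpos (by linarith : c / (1 - a) - 1 ≤ 0)]
        field_simp
        ring
  exact ⟨⟨_, (key _).mpr rfl, fun y hy => (key y).mp hy⟩, key⟩
end
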